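/- Let F = F(X) be the free group on X = {x₁, …, xₙ}, let G = F/N be a finite quotient of F, let p be a prime not dividing the order of G, set M = Nᵖ[N, N], and let γ : F/M → F/N be the canonical homomorphism. Then for every i = 1, …, n, the image γ(C_{F/M}(x_i M)) of the centralizer of x_i M in F/M coincides with the cyclic subgroup ⟨x_i N⟩ of F/N. -/

import Mathlib

set_option linter.unusedVariables false

namespace CSP

variable {F : Type*} [Group F]

/-- The subgroup `Nᵖ[N,N]` generated by all `p`-th powers of elements of `N`
together with the commutator subgroup `[N,N]`. -/
def powCommSubgroup (p : ℕ) (N : Subgroup F) : Subgroup F :=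
  Subgroup.closure ((· ^ p) '' (N : Set F)) ⊔ ⁅N, N⁆

lemma powCommSubgroup_le (p : ℕ) (N : Subgroup F) : powCommSubgroup p N ≤ N := by
  apply sup_le
  · rw [Subgroup.closure_le]
    rintro _ ⟨x, hx, rfl⟩
    exact N.pow_mem hx p
  · refine Subgroup.commutator_le.2 fun a ha b hb => ?_
    rw [commutatorElement_def]
    exact N.mul_mem (N.mul_mem (N.mul_mem ha hb) (N.inv_mem ha)) (N.inv_mem hb)

instance powCommSubgroup_normal (p : ℕ) (N : Subgroup F) [hN : N.Normal] :
    (powCommSubgroup p N).Normal := by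
  have h1 : (Subgroup.closure ((· ^ p) '' (N : Set F))).Normal := by
    constructor
    intro n hn g
    have hmap : Subgroup.map (MulAut.conj g).toMonoidHom
        (Subgroup.closure ((· ^ p) '' (N : Set F)))
        ≤ Subgroup.closure ((· ^ p) '' (N : Set F)) := by
      rw [MonoidHom.map_closure]
      apply Subgroup.closure_mono
      rintro _ ⟨_, ⟨x, hx, rfl⟩, rfl⟩
      exact ⟨g * x * g⁻¹, hN.conj_mem x hx g, by simp [conj_pow, MulAut.conj_apply]⟩
    exact hmap ⟨n, hn, rfl⟩
  haveI := h1
  unfold powCommSubgroup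
  infer_instance

/-! The assignment `xⱼ ↦ (eⱼ, xⱼN)` extends to a Magnus-type homomorphism `F → (𝔽ₚ[G])ⁿ ⋊ G`.
It sends `N` into the elementary abelian `p`-group `(𝔽ₚ[G])ⁿ`, so it kills `M`. If `fM` commutes
with `xᵢM`, then the image `(v, h)` of `f`, where `h = fN`, commutes with `(eᵢ, g)`, `g = xᵢN`.
Comparing `i`-th coordinates gives `b(x) - b(g⁻¹x) = δ₁(x) - δₕ(x)` for `b = vᵢ`. Summed over the
finite subgroup `⟨g⟩`, the left side vanishes, while the right side is `1 ≠ 0` unless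
`h ∈ ⟨g⟩`. -/

lemma powCommSubgroup_le_ker {H : Type*} [Group H] {p : ℕ} {N : Subgroup F}
    (φ : F →* H) (hcomm : ∀ x ∈ N, ∀ y ∈ N, Commute (φ x) (φ y))
    (hpow : ∀ x ∈ N, φ x ^ p = 1) : powCommSubgroup p N ≤ φ.ker := by
  refine sup_le ?_ (Subgroup.commutator_le.2 fun x hx y hy => ?_)
  · rw [Subgroup.closure_le]
    rintro _ ⟨x, hx, rfl⟩
    simpa using hpow x hx
  · rw [MonoidHom.mem_ker, map_commutatorElement, commutatorElement_eq_one_iff_commute]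
    exact hcomm x hx y hy

section Magnus

variable {ι G A : Type*} [Group G] [AddCommGroup A]

/- `A[G]^ι` is modelled by all functions `ι → G → A` (more than the group ring when `G` is
infinite, which is harmless). -/
variable (ι A) in
def translate : G →* MulAut (Multiplicative (ι → G → A)) where
  toFun g :=
    { toFun := fun v => .ofAdd fun j x => v.toAdd j (g⁻¹ * x)
      invFun := fun v => .ofAdd fun j x => v.toAdd j (g * x)
      left_inv := fun v => by simp [← mul_assoc]
      right_inv := fun v => by simp [← mul_assoc]
      map_mul' := fun _ _ => rfl }
  map_one' := by ext; simp
  map_mul' := fun _ _ => by ext; simp [mul_assoc]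

@[simp]
lemma toAdd_translate (g : G) (v : Multiplicative (ι → G → A)) (j : ι) (x : G) :
    (translate ι A g v).toAdd j x = v.toAdd j (g⁻¹ * x) := rfl

variable (ι G A) in
abbrev MagnusGroup : Type _ := Multiplicative (ι → G → A) ⋊[translate ι A] G

variable [DecidableEq ι] [DecidableEq G]

def magnusGen (i : ι) (a : A) (g : G) : MagnusGroup ι G A :=
  ⟨.ofAdd (Pi.single i (Pi.single 1 a)), g⟩

def magnusHom (a : A) (g : ι → G) : FreeGroup ι →* MagnusGroup ι G A :=
  FreeGroup.lift fun j => magnusGen j a (g j)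

lemma magnusHom_of (a : A) (g : ι → G) (i : ι) :
    magnusHom a g (.of i) = magnusGen i a (g i) := FreeGroup.lift_apply_of

lemma right_magnusHom (a : A) (g : ι → G) (f : FreeGroup ι) :
    (magnusHom a g f).right = FreeGroup.lift g f := by
  rw [← SemidirectProduct.rightHom_eq_right, ← MonoidHom.comp_apply]
  congr 1
  exact FreeGroup.ext_hom _ _ fun j => rfl

lemma powCommSubgroup_le_ker_magnusHom {p : ℕ} (hA : ∀ x : A, p • x = 0) (a : A) (g : ι → G)
    {N : Subgroup (FreeGroup ι)} (hN : N ≤ (FreeGroup.lift g).ker) :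
    powCommSubgroup p N ≤ (magnusHom a g).ker := by
  have hinl : ∀ f ∈ N, magnusHom a g f = .inl (magnusHom a g f).left := fun f hf => by
    have hright : (magnusHom a g f).right = 1 := by rw [right_magnusHom]; exact hN hf
    simpa [hright] using (SemidirectProduct.inl_left_mul_inr_right (magnusHom a g f)).symm
  refine powCommSubgroup_le_ker _ (fun x hx y hy => ?_) (fun x hx => ?_)
  · rw [hinl x hx, hinl y hy]
    exact (Commute.all _ _).map _
  · have hpow : (magnusHom a g x).left ^ p = 1 :=
      Multiplicative.toAdd.injective (funext₂ fun _ _ => hA _)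
    rw [hinl x hx, ← map_pow, hpow, map_one]

lemma right_mem_zpowers_of_commute {i : ι} {a : A} (ha : a ≠ 0) {g : G} (hg : IsOfFinOrder g)
    {w : MagnusGroup ι G A} (hw : Commute w (magnusGen i a g)) : w.right ∈ Subgroup.zpowers g := by
  obtain ⟨v, h⟩ := w
  change h ∈ Subgroup.zpowers g
  have hb : ∀ x, v.toAdd i x - v.toAdd i (g⁻¹ * x) =
      (Pi.single 1 a : G → A) x - (Pi.single h a : G → A) x := by
    intro x
    have hleft := congrArg (fun w : MagnusGroup ι G A => w.left.toAdd i x) hw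
    simp only [magnusGen, SemidirectProduct.mul_left, toAdd_mul, Pi.add_apply, toAdd_translate,
      toAdd_ofAdd, Pi.single_eq_same, Pi.single_apply, inv_mul_eq_one, eq_comm (a := h)] at hleft
    rwa [sub_eq_sub_iff_add_eq_add, Pi.single_apply, Pi.single_apply]
  by_contra hh
  have : Fintype (Subgroup.zpowers g) := hg.finite_zpowers.fintype
  have htelescope : ∑ y : Subgroup.zpowers g, (v.toAdd i y - v.toAdd i (g⁻¹ * y)) = 0 := by
    rw [Finset.sum_sub_distrib, sub_eq_zero]
    exact (Fintype.sum_equiv (Equiv.mulLeft (⟨g, Subgroup.mem_zpowers g⟩ : Subgroup.zpowers g)⁻¹)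
      _ _ fun _ => rfl).symm
  have hone : ∑ y : Subgroup.zpowers g, (Pi.single 1 a : G → A) y = a := by
    refine (Fintype.sum_eq_single 1 fun y hy => ?_).trans
      (Pi.single_eq_same (M := fun _ => A) 1 a)
    exact Pi.single_eq_of_ne (M := fun _ => A) (fun hy' => hy (Subtype.ext hy')) a
  have hzero : ∑ y : Subgroup.zpowers g, (Pi.single h a : G → A) y = 0 :=
    Finset.sum_eq_zero fun y _ => Pi.single_eq_of_ne (M := fun _ => A)
      (fun hy : (y : G) = h => hh (hy ▸ y.2)) a
  simp only [hb, Finset.sum_sub_distrib, hone, hzero, sub_zero] at htelescope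
  exact ha htelescope

end Magnus

theorem centralizer_image_eq_cyclic
    (n : ℕ) (N : Subgroup (FreeGroup (Fin n))) [N.Normal]
    [Finite (FreeGroup (Fin n) ⧸ N)]
    (p : ℕ) (hp : p.Prime) :
    ∀ i : Fin n,
      Subgroup.map
        (QuotientGroup.map (powCommSubgroup p N) N (MonoidHom.id (FreeGroup (Fin n)))
          (by simpa using powCommSubgroup_le p N))
        (Subgroup.centralizer
          {((FreeGroup.of i : FreeGroup (Fin n)) :
              FreeGroup (Fin n) ⧸ powCommSubgroup p N)})
      = Subgroup.zpowers ((FreeGroup.of i : FreeGroup (Fin n)) : FreeGroup (Fin n) ⧸ N) := by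
  classical
  intro i
  have : Fact p.Prime := ⟨hp⟩
  let q := QuotientGroup.mk' N
  let φ := magnusHom (1 : ZMod p) fun j => q (.of j)
  have hlift : FreeGroup.lift (fun j => q (.of j)) = q := FreeGroup.ext_hom _ _ fun _ => rfl
  have hM : powCommSubgroup p N ≤ φ.ker := powCommSubgroup_le_ker_magnusHom
    (fun x => by simp) 1 _ (by rw [hlift, QuotientGroup.ker_mk'])
  refine le_antisymm ?_
    (Subgroup.zpowers_le.2 ⟨_, Subgroup.mem_centralizer_singleton_iff.2 rfl, rfl⟩)
  rintro _ ⟨y, hy, rfl⟩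
  induction y using QuotientGroup.induction_on with | H f => ?_
  have hcomm : Commute (φ f) (φ (.of i)) :=
    Commute.map (Subgroup.mem_centralizer_singleton_iff.1 hy) (QuotientGroup.lift _ φ hM)
  rw [magnusHom_of] at hcomm
  have hright := right_mem_zpowers_of_commute one_ne_zero (isOfFinOrder_of_finite _) hcomm
  rwa [right_magnusHom, hlift] at hright

end CSP
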